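/- arXiv:1408.0294 — 2 statements merged into one kernel-verified Lean document; each statement's English description precedes it below -/
import Mathlib

section
/- Let $X$ and $Y$ be positively associated, square-integrable random variables with $X \le \kappa$ and $Y \le \kappa$ almost surely for some $\kappa > 0$. Then for every $t > 0$, $\big|\mathrm{Cov}(e^{tX}, e^{tY})\big| \le t^2 e^{2 t \kappa}\, \mathrm{Cov}(X, Y)$. -/
open MeasureTheory ProbabilityTheory

/-- Covariance of two real-valued random variables. -/
noncomputable def cov {Ω : Type*} [MeasurableSpace Ω] (μ : Measure Ω) (X Y : Ω → ℝ) : ℝ :=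
  (∫ ω, X ω * Y ω ∂μ) - (∫ ω, X ω ∂μ) * (∫ ω, Y ω ∂μ)

/-- A pair of real random variables is positively associated if every pair of bounded
measurable coordinatewise-nondecreasing functions `f g : ℝ² → ℝ` of the pair has
nonnegative covariance. -/
def PosAssocPair {Ω : Type*} [MeasurableSpace Ω] (μ : Measure Ω) (X Y : Ω → ℝ) : Prop :=
  ∀ f g : ℝ × ℝ → ℝ, Measurable f → Measurable g →
    (∃ C, ∀ x, |f x| ≤ C) → (∃ C, ∀ x, |g x| ≤ C) →
    Monotone f → Monotone g →
    0 ≤ cov μ (fun ω => f (X ω, Y ω)) (fun ω => g (X ω, Y ω))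

/- ### Auxiliary lemmas -/

lemma integrable_mul_of_memL2 {Ω : Type*} [MeasurableSpace Ω] {μ : Measure Ω} {f g : Ω → ℝ}
    (hf : MemLp f 2 μ) (hg : MemLp g 2 μ) : Integrable (fun ω => f ω * g ω) μ := by
  refine Integrable.mono' (hf.integrable_sq.add hg.integrable_sq)
    (hf.aestronglyMeasurable.mul hg.aestronglyMeasurable) (ae_of_all _ fun ω => ?_)
  have h := abs_mul_abs_self (f ω)
  have h2 := abs_mul_abs_self (g ω)
  have h3 := abs_nonneg (f ω)
  have h4 := abs_nonneg (g ω)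
  rw [Real.norm_eq_abs, abs_mul]
  simp only [Pi.add_apply]
  nlinarith [sq_nonneg (|f ω| - |g ω|), sq_abs (f ω), sq_abs (g ω)]

/-- Clamp to `[-n, n]`. -/
noncomputable def clamp (n : ℕ) (x : ℝ) : ℝ := max (min x n) (-(n : ℝ))

lemma clamp_mono (n : ℕ) : Monotone (clamp n) := fun x y h =>
  max_le_max (min_le_min h le_rfl) le_rfl

lemma clamp_measurable (n : ℕ) : Measurable (clamp n) :=
  (measurable_id.min measurable_const).max measurable_const

lemma abs_clamp_le (n : ℕ) (x : ℝ) : |clamp n x| ≤ |x| := by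
  have hn : (0:ℝ) ≤ n := Nat.cast_nonneg n
  rw [abs_le]
  constructor
  · exact le_trans (le_min (neg_abs_le x) (by linarith [abs_nonneg x])) (le_max_left _ _)
  · refine max_le (le_trans (min_le_left _ _) (le_abs_self x)) (by linarith [abs_nonneg x])

lemma clamp_mem (n : ℕ) (x : ℝ) : -(n:ℝ) ≤ clamp n x ∧ clamp n x ≤ n := by
  have hn : (0:ℝ) ≤ n := Nat.cast_nonneg n
  exact ⟨le_max_right _ _, max_le (le_trans (min_le_right _ _) le_rfl) (by linarith)⟩

lemma clamp_eq (n : ℕ) (x : ℝ) (h : |x| ≤ n) : clamp n x = x := by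
  have h1 : x ≤ n := le_trans (le_abs_self x) h
  have h2 : -(n:ℝ) ≤ x := by
    have := neg_abs_le x; linarith
  rw [clamp, min_eq_left h1, max_eq_left h2]

lemma tendsto_clamp (f : ℝ → ℝ) (x : ℝ) :
    Filter.Tendsto (fun n : ℕ => f (clamp n x)) Filter.atTop (nhds (f x)) := by
  obtain ⟨N, hN⟩ := exists_nat_ge |x|
  refine Filter.Tendsto.congr' ?_ (tendsto_const_nhds (x := f x))
  filter_upwards [Filter.eventually_ge_atTop N] with n hn
  rw [clamp_eq n x (le_trans hN (by exact_mod_cast hn))]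

/-- Extension of positive association to monotone functions of linear growth. -/
lemma covA {Ω : Type*} [MeasurableSpace Ω] (μ : Measure Ω) [IsProbabilityMeasure μ]
    (X Y : Ω → ℝ) (hX : Measurable X) (hY : Measurable Y)
    (hX2 : MemLp X 2 μ) (hY2 : MemLp Y 2 μ)
    (hassoc : PosAssocPair μ X Y)
    (f g : ℝ → ℝ) (hf : Measurable f) (hg : Measurable g)
    (hfm : Monotone f) (hgm : Monotone g)
    (a b : ℝ) (ha : 0 ≤ a) (hfb : ∀ x, |f x| ≤ a * |x| + b)
    (c d : ℝ) (hc : 0 ≤ c) (hgb : ∀ x, |g x| ≤ c * |x| + d) :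
    0 ≤ cov μ (fun ω => f (X ω)) (fun ω => g (Y ω)) := by
  -- L² facts
  have hXa : MemLp (fun ω => a * |X ω| + b) 2 μ := by
    have : MemLp (fun ω => |X ω|) 2 μ := by
      simpa [Real.norm_eq_abs] using hX2.norm
    exact (this.const_mul a).add (memLp_const b)
  have hYc : MemLp (fun ω => c * |Y ω| + d) 2 μ := by
    have : MemLp (fun ω => |Y ω|) 2 μ := by
      simpa [Real.norm_eq_abs] using hY2.norm
    exact (this.const_mul c).add (memLp_const d)
  have ibound1 : Integrable (fun ω => a * |X ω| + b) μ := hXa.integrable one_le_two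
  have ibound2 : Integrable (fun ω => c * |Y ω| + d) μ := hYc.integrable one_le_two
  have iboundP : Integrable (fun ω => (a * |X ω| + b) * (c * |Y ω| + d)) μ :=
    integrable_mul_of_memL2 hXa hYc
  -- bounds for the truncations
  have hfbd : ∀ n : ℕ, ∀ x, |f (clamp n x)| ≤ a * |x| + b := fun n x =>
    le_trans (hfb _) (by nlinarith [abs_clamp_le n x])
  have hgbd : ∀ n : ℕ, ∀ x, |g (clamp n x)| ≤ c * |x| + d := fun n x =>
    le_trans (hgb _) (by nlinarith [abs_clamp_le n x])
  -- measurability of truncations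
  have hfmeas : ∀ n : ℕ, AEStronglyMeasurable (fun ω => f (clamp n (X ω))) μ := fun n =>
    ((hf.comp (clamp_measurable n)).comp hX).aestronglyMeasurable
  have hgmeas : ∀ n : ℕ, AEStronglyMeasurable (fun ω => g (clamp n (Y ω))) μ := fun n =>
    ((hg.comp (clamp_measurable n)).comp hY).aestronglyMeasurable
  -- each truncated covariance is nonnegative
  have key : ∀ n : ℕ, 0 ≤ (∫ ω, f (clamp n (X ω)) * g (clamp n (Y ω)) ∂μ) -
      (∫ ω, f (clamp n (X ω)) ∂μ) * (∫ ω, g (clamp n (Y ω)) ∂μ) := by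
    intro n
    have hb1 : ∃ C, ∀ p : ℝ × ℝ, |f (clamp n p.1)| ≤ C := by
      refine ⟨|f (-(n:ℝ))| + |f n|, fun p => ?_⟩
      have h1 := hfm (clamp_mem n p.1).1
      have h2 := hfm (clamp_mem n p.1).2
      rw [abs_le]
      constructor
      · have := neg_abs_le (f (-(n:ℝ))); have := abs_nonneg (f (n:ℝ)); linarith
      · have := le_abs_self (f (n:ℝ)); have := abs_nonneg (f (-(n:ℝ))); linarith
    have hb2 : ∃ C, ∀ p : ℝ × ℝ, |g (clamp n p.2)| ≤ C := by
      refine ⟨|g (-(n:ℝ))| + |g n|, fun p => ?_⟩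
      have h1 := hgm (clamp_mem n p.2).1
      have h2 := hgm (clamp_mem n p.2).2
      rw [abs_le]
      constructor
      · have := neg_abs_le (g (-(n:ℝ))); have := abs_nonneg (g (n:ℝ)); linarith
      · have := le_abs_self (g (n:ℝ)); have := abs_nonneg (g (-(n:ℝ))); linarith
    have := hassoc (fun p => f (clamp n p.1)) (fun p => g (clamp n p.2))
      ((hf.comp (clamp_measurable n)).comp measurable_fst)
      ((hg.comp (clamp_measurable n)).comp measurable_snd)
      hb1 hb2
      (fun p q hpq => hfm (clamp_mono n hpq.1))
      (fun p q hpq => hgm (clamp_mono n hpq.2))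
    simpa [cov] using this
  -- limits
  have T1 : Filter.Tendsto
      (fun n : ℕ => ∫ ω, f (clamp n (X ω)) * g (clamp n (Y ω)) ∂μ) Filter.atTop
      (nhds (∫ ω, f (X ω) * g (Y ω) ∂μ)) := by
    refine tendsto_integral_of_dominated_convergence
      (fun ω => (a * |X ω| + b) * (c * |Y ω| + d))
      (fun n => (hfmeas n).mul (hgmeas n)) iboundP (fun n => ae_of_all _ fun ω => ?_)
      (ae_of_all _ fun ω => ((tendsto_clamp f (X ω)).mul (tendsto_clamp g (Y ω))))
    rw [Real.norm_eq_abs, abs_mul]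
    have h1 := hfbd n (X ω); have h2 := hgbd n (Y ω)
    have h3 := abs_nonneg (f (clamp n (X ω))); have h4 := abs_nonneg (g (clamp n (Y ω)))
    exact mul_le_mul h1 h2 h4 (le_trans h3 h1)
  have T2 : Filter.Tendsto (fun n : ℕ => ∫ ω, f (clamp n (X ω)) ∂μ) Filter.atTop
      (nhds (∫ ω, f (X ω) ∂μ)) := by
    refine tendsto_integral_of_dominated_convergence (fun ω => a * |X ω| + b)
      hfmeas ibound1 (fun n => ae_of_all _ fun ω => ?_)
      (ae_of_all _ fun ω => tendsto_clamp f (X ω))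
    rw [Real.norm_eq_abs]; exact hfbd n (X ω)
  have T3 : Filter.Tendsto (fun n : ℕ => ∫ ω, g (clamp n (Y ω)) ∂μ) Filter.atTop
      (nhds (∫ ω, g (Y ω) ∂μ)) := by
    refine tendsto_integral_of_dominated_convergence (fun ω => c * |Y ω| + d)
      hgmeas ibound2 (fun n => ae_of_all _ fun ω => ?_)
      (ae_of_all _ fun ω => tendsto_clamp g (Y ω))
    rw [Real.norm_eq_abs]; exact hgbd n (Y ω)
  have := ge_of_tendsto' (T1.sub (T2.mul T3)) key
  simpa [cov] using this

lemma cov_congr {Ω : Type*} [MeasurableSpace Ω] {μ : Measure Ω} {f f' g g' : Ω → ℝ}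
    (hf : f =ᵐ[μ] f') (hg : g =ᵐ[μ] g') : cov μ f g = cov μ f' g' := by
  unfold cov
  rw [integral_congr_ae hf, integral_congr_ae hg,
    integral_congr_ae (show (fun ω => f ω * g ω) =ᵐ[μ] fun ω => f' ω * g' ω by
      filter_upwards [hf, hg] with ω h1 h2; rw [h1, h2])]

theorem stmt3 {Ω : Type*} [MeasurableSpace Ω] (μ : Measure Ω) [IsProbabilityMeasure μ]
    (X Y : Ω → ℝ) (hX : Measurable X) (hY : Measurable Y)
    (hX2 : MemLp X 2 μ) (hY2 : MemLp Y 2 μ)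
    (hassoc : PosAssocPair μ X Y)
    (κ : ℝ) (hκ : 0 < κ)
    (hXκ : ∀ᵐ ω ∂μ, X ω ≤ κ) (hYκ : ∀ᵐ ω ∂μ, Y ω ≤ κ)
    (t : ℝ) (ht : 0 < t) :
    |cov μ (fun ω => Real.exp (t * X ω)) (fun ω => Real.exp (t * Y ω))| ≤
      t ^ 2 * Real.exp (2 * t * κ) * cov μ X Y := by
  set L : ℝ := t * Real.exp (t * κ) with hLdef
  set F : ℝ → ℝ := fun x => Real.exp (t * min x κ) with hFdef
  have hE : (0:ℝ) < Real.exp (t * κ) := Real.exp_pos _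
  have hL0 : 0 ≤ L := by positivity
  have hFmeas : Measurable F := (Real.measurable_exp.comp
    (measurable_const.mul (measurable_id.min measurable_const)))
  have hFmono : Monotone F := fun x y hxy =>
    Real.exp_le_exp.2 (mul_le_mul_of_nonneg_left (min_le_min hxy le_rfl) ht.le)
  have hFpos : ∀ x, 0 < F x := fun x => Real.exp_pos _
  have hFle : ∀ x, F x ≤ Real.exp (t * κ) := fun x =>
    Real.exp_le_exp.2 (mul_le_mul_of_nonneg_left (min_le_right _ _) ht.le)
  -- Lipschitz: F y - F x ≤ L * (y - x) for x ≤ y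
  have hLip : ∀ x y : ℝ, x ≤ y → F y - F x ≤ L * (y - x) := by
    intro x y hxy
    set r := t * min x κ
    set s := t * min y κ
    have hrs : r ≤ s := mul_le_mul_of_nonneg_left (min_le_min hxy le_rfl) ht.le
    have h1 : Real.exp s - Real.exp r ≤ Real.exp s * (s - r) := by
      have h := Real.add_one_le_exp (r - s)
      have h2 : Real.exp r = Real.exp s * Real.exp (r - s) := by
        rw [← Real.exp_add]; ring_nf
      nlinarith [Real.exp_pos s]
    have h2 : Real.exp s ≤ Real.exp (t * κ) :=
      Real.exp_le_exp.2 (mul_le_mul_of_nonneg_left (min_le_right _ _) ht.le)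
    have h3 : s - r ≤ t * (y - x) := by
      have : min y κ - min x κ ≤ y - x := by
        rcases le_total x κ with h | h <;> rcases le_total y κ with h' | h' <;>
          simp [min_eq_left, min_eq_right, h, h'] <;> linarith
      have := mul_le_mul_of_nonneg_left this ht.le
      simp only [r, s]; linarith
    have h4 : 0 ≤ s - r := by linarith
    calc F y - F x = Real.exp s - Real.exp r := rfl
      _ ≤ Real.exp s * (s - r) := h1
      _ ≤ Real.exp (t * κ) * (t * (y - x)) := by nlinarith [Real.exp_pos s]
      _ = L * (y - x) := by rw [hLdef]; ring
  -- the functions u and w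
  set u : ℝ → ℝ := fun x => L * x - F x with hudef
  have humono : Monotone u := fun x y hxy => by
    have := hLip x y hxy; simp only [u]; linarith
  have humeas : Measurable u := (measurable_id.const_mul L).sub hFmeas
  have hub : ∀ x, |u x| ≤ L * |x| + Real.exp (t * κ) := by
    intro x
    have h1 : |L * x| ≤ L * |x| := by rw [abs_mul, abs_of_nonneg hL0]
    have h2 := hFpos x; have h3 := hFle x
    rw [abs_le]; constructor
    · have := neg_abs_le (L * x); simp only [u]; linarith
    · have := le_abs_self (L * x); simp only [u]; linarith
  have hFb : ∀ x, |F x| ≤ 0 * |x| + Real.exp (t * κ) := fun x => by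
    rw [abs_of_pos (hFpos x)]; simpa using hFle x
  have hvb : ∀ x : ℝ, |L * x| ≤ L * |x| + 0 := fun x => by
    rw [abs_mul, abs_of_nonneg hL0]; simp
  -- three applications of positive association
  have h1 : 0 ≤ cov μ (fun ω => u (X ω)) (fun ω => L * Y ω) :=
    covA μ X Y hX hY hX2 hY2 hassoc u (fun y => L * y) humeas
      (measurable_id.const_mul L) humono (fun x y hxy => mul_le_mul_of_nonneg_left hxy hL0)
      L (Real.exp (t * κ)) hL0 hub L 0 hL0 hvb
  have h2 : 0 ≤ cov μ (fun ω => F (X ω)) (fun ω => u (Y ω)) :=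
    covA μ X Y hX hY hX2 hY2 hassoc F u hFmeas humeas hFmono humono
      0 (Real.exp (t * κ)) le_rfl hFb L (Real.exp (t * κ)) hL0 hub
  have h3 : 0 ≤ cov μ (fun ω => F (X ω)) (fun ω => F (Y ω)) :=
    covA μ X Y hX hY hX2 hY2 hassoc F F hFmeas hFmeas hFmono hFmono
      0 (Real.exp (t * κ)) le_rfl hFb 0 (Real.exp (t * κ)) le_rfl hFb
  -- integrability
  have iX : Integrable X μ := hX2.integrable one_le_two
  have iY : Integrable Y μ := hY2.integrable one_le_two
  have iXY : Integrable (fun ω => X ω * Y ω) μ := integrable_mul_of_memL2 hX2 hY2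
  have iFX : Integrable (fun ω => F (X ω)) μ := by
    refine Integrable.mono' (integrable_const (Real.exp (t * κ)))
      ((hFmeas.comp hX).aestronglyMeasurable) (ae_of_all _ fun ω => ?_)
    rw [Real.norm_eq_abs, abs_of_pos (hFpos _)]; exact hFle _
  have iFY : Integrable (fun ω => F (Y ω)) μ := by
    refine Integrable.mono' (integrable_const (Real.exp (t * κ)))
      ((hFmeas.comp hY).aestronglyMeasurable) (ae_of_all _ fun ω => ?_)
    rw [Real.norm_eq_abs, abs_of_pos (hFpos _)]; exact hFle _
  have iFXY : Integrable (fun ω => F (X ω) * Y ω) μ := by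
    refine Integrable.bdd_mul iY ((hFmeas.comp hX).aestronglyMeasurable)
      (c := Real.exp (t * κ)) (ae_of_all _ fun ω => ?_)
    rw [Real.norm_eq_abs, abs_of_pos (hFpos _)]; exact hFle _
  have iFXFY : Integrable (fun ω => F (X ω) * F (Y ω)) μ := by
    refine Integrable.bdd_mul iFY ((hFmeas.comp hX).aestronglyMeasurable)
      (c := Real.exp (t * κ)) (ae_of_all _ fun ω => ?_)
    rw [Real.norm_eq_abs, abs_of_pos (hFpos _)]; exact hFle _
  -- integral identities
  have e1 : ∫ ω, u (X ω) * (L * Y ω) ∂μ =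
      L^2 * (∫ ω, X ω * Y ω ∂μ) - L * (∫ ω, F (X ω) * Y ω ∂μ) := by
    have : (fun ω => u (X ω) * (L * Y ω)) =
        fun ω => L^2 * (X ω * Y ω) - L * (F (X ω) * Y ω) := by
      funext ω; simp only [u]; ring
    rw [this, integral_sub (iXY.const_mul _) (iFXY.const_mul _),
      integral_const_mul, integral_const_mul]
  have e2 : ∫ ω, u (X ω) ∂μ = L * (∫ ω, X ω ∂μ) - ∫ ω, F (X ω) ∂μ := by
    have : (fun ω => u (X ω)) = fun ω => L * X ω - F (X ω) := rfl
    rw [this, integral_sub (iX.const_mul _) iFX, integral_const_mul]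
  have e3 : ∫ ω, L * Y ω ∂μ = L * ∫ ω, Y ω ∂μ := integral_const_mul _ _
  have e4 : ∫ ω, F (X ω) * u (Y ω) ∂μ =
      L * (∫ ω, F (X ω) * Y ω ∂μ) - ∫ ω, F (X ω) * F (Y ω) ∂μ := by
    have : (fun ω => F (X ω) * u (Y ω)) =
        fun ω => L * (F (X ω) * Y ω) - F (X ω) * F (Y ω) := by
      funext ω; simp only [u]; ring
    rw [this, integral_sub (iFXY.const_mul _) iFXFY, integral_const_mul]
  have e5 : ∫ ω, u (Y ω) ∂μ = L * (∫ ω, Y ω ∂μ) - ∫ ω, F (Y ω) ∂μ := by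
    have : (fun ω => u (Y ω)) = fun ω => L * Y ω - F (Y ω) := rfl
    rw [this, integral_sub (iY.const_mul _) iFY, integral_const_mul]
  -- combine
  have hmain : cov μ (fun ω => F (X ω)) (fun ω => F (Y ω)) ≤ L^2 * cov μ X Y := by
    have H1 := h1; have H2 := h2
    simp only [cov] at H1 H2 ⊢
    rw [e1, e2, e3] at H1
    rw [e4, e5] at H2
    nlinarith
  -- a.e. congruence
  have hcongr : cov μ (fun ω => Real.exp (t * X ω)) (fun ω => Real.exp (t * Y ω)) =
      cov μ (fun ω => F (X ω)) (fun ω => F (Y ω)) := by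
    refine cov_congr ?_ ?_
    · filter_upwards [hXκ] with ω hω
      simp only [F, min_eq_left hω]
    · filter_upwards [hYκ] with ω hω
      simp only [F, min_eq_left hω]
  rw [hcongr, abs_of_nonneg h3]
  have hLsq : L^2 = t^2 * Real.exp (2 * t * κ) := by
    rw [hLdef, mul_pow, sq (Real.exp (t * κ)), ← Real.exp_add]; ring_nf
  linarith [hmain, hLsq ▸ hmain]
end

section
/- Let $n \ge 3$, let $(Y_{i,j})_{1 \le i < j \le n}$ be i.i.d. random variables with $\mathbb{P}(Y_{i,j} = 1) = p = 1 - \mathbb{P}(Y_{i,j} = 0)$, where $0 < p < 1$, for each $3$-element subset $T = \{s_1, s_2, s_3\}$ of $\{1, \ldots, n\}$ let $Z_T = Y_{s_1,s_2} Y_{s_2,s_3} Y_{s_1,s_3}$, and let $Z = \sum_T Z_T$ be the number of triangles in $G(n,p)$. Then for every $t > 0$, $\mathbb{P}(Z = 0) \le (1 - p^3)^{\binom{n}{3}} \Big(1 + e^{-t}\frac{p^3}{1 - p^3}\Big)^{\binom{n}{3}} + t^2 \cdot \frac{3}{2}\binom{n}{3}(n-3)\, p^5$. -/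
open MeasureTheory ProbabilityTheory Finset

/-- A finite family of real random variables is positively associated if every pair of
bounded measurable coordinatewise-nondecreasing functionals of the family has
nonnegative covariance. -/
def PosAssoc {Ω : Type*} [MeasurableSpace Ω] (μ : Measure Ω) {I : Type*} [Fintype I]
    (X : I → Ω → ℝ) : Prop :=
  ∀ f g : (I → ℝ) → ℝ, Measurable f → Measurable g →
    (∃ C, ∀ x, |f x| ≤ C) → (∃ C, ∀ x, |g x| ≤ C) →
    Monotone f → Monotone g →
    0 ≤ cov μ (fun ω => f (fun i => X i ω)) (fun ω => g (fun i => X i ω))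

set_option linter.unusedVariables false
set_option linter.unusedSectionVars false
set_option maxHeartbeats 1000000


variable {n : ℕ}

private def triE (T : {T : Finset (Fin n) // T.card = 3}) :
    Finset {e : Finset (Fin n) // e.card = 2} :=
  Finset.univ.filter (fun e => e.val ⊆ T.val)

lemma mem_triE {T : {T : Finset (Fin n) // T.card = 3}} {e} :
    e ∈ triE T ↔ e.val ⊆ T.val := by simp [triE]

lemma card_triE (T : {T : Finset (Fin n) // T.card = 3}) : (triE T).card = 3 := by
  classical
  have : (triE T).card = (T.val.powersetCard 2).card := by
    apply Finset.card_bij (fun e _ => e.val)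
    · intro e he
      rw [Finset.mem_powersetCard]
      exact ⟨mem_triE.1 he, e.2⟩
    · intro e _ e' _ h; exact Subtype.ext h
    · intro s hs
      rw [Finset.mem_powersetCard] at hs
      exact ⟨⟨s, hs.2⟩, mem_triE.2 hs.1, rfl⟩
  rw [this, Finset.card_powersetCard, T.2]; decide

lemma triE_disj {T T' : {T : Finset (Fin n) // T.card = 3}} (hne : T ≠ T')
    (h : (T.val ∩ T'.val).card ≠ 2) : Disjoint (triE T) (triE T') := by
  classical
  rw [Finset.disjoint_left]
  intro e he he'
  have hsub : e.val ⊆ T.val ∩ T'.val := Finset.subset_inter (mem_triE.1 he) (mem_triE.1 he')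
  have h2 : 2 ≤ (T.val ∩ T'.val).card := by
    have := Finset.card_le_card hsub
    rwa [e.2] at this
  have h3 : (T.val ∩ T'.val).card ≤ 3 := by
    have := Finset.card_le_card (Finset.inter_subset_left (s₁ := T.val) (s₂ := T'.val))
    rwa [T.2] at this
  interval_cases hc : (T.val ∩ T'.val).card
  · exact h rfl
  · -- card inter = 3 = card T, so T.val ⊆ T'.val hence equal
    have h4 : T.val ∩ T'.val = T.val :=
      Finset.eq_of_subset_of_card_le Finset.inter_subset_left (by rw [hc, T.2])
    have h5 : T.val ⊆ T'.val := by rw [← h4]; exact Finset.inter_subset_right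
    exact hne (Subtype.ext (Finset.eq_of_subset_of_card_le h5 (by rw [T.2, T'.2])))

lemma triE_inter {T T' : {T : Finset (Fin n) // T.card = 3}}
    (h : (T.val ∩ T'.val).card = 2) :
    triE T ∩ triE T' = {⟨T.val ∩ T'.val, h⟩} := by
  classical
  ext e
  simp only [Finset.mem_inter, mem_triE, Finset.mem_singleton]
  constructor
  · rintro ⟨h1, h2⟩
    have hsub : e.val ⊆ T.val ∩ T'.val := Finset.subset_inter h1 h2
    exact Subtype.ext (Finset.eq_of_subset_of_card_le hsub (by rw [e.2, h]))
  · rintro rfl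
    exact ⟨Finset.inter_subset_left, Finset.inter_subset_right⟩

lemma card_triE_union {T T' : {T : Finset (Fin n) // T.card = 3}}
    (h : (T.val ∩ T'.val).card = 2) :
    (triE T ∪ triE T').card = 5 := by
  classical
  have := Finset.card_inter_add_card_union (triE T) (triE T')
  rw [triE_inter h, Finset.card_singleton, card_triE, card_triE] at this
  omega

lemma nbr_count (T : {T : Finset (Fin n) // T.card = 3}) :
    (Finset.univ.filter
      (fun T' : {T : Finset (Fin n) // T.card = 3} => (T.val ∩ T'.val).card = 2)).card
      ≤ 3 * (n - 3) := by
  classical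
  have hcard : ((T.val.powersetCard 2) ×ˢ ((T.valᶜ).powersetCard 1)).card = 3 * (n-3) := by
    rw [Finset.card_product, Finset.card_powersetCard, Finset.card_powersetCard, T.2,
      Finset.card_compl, T.2, Fintype.card_fin]
    simp [Nat.choose_one_right]
  rw [← hcard]
  apply Finset.card_le_card_of_injOn (fun T' => (T'.val ∩ T.val, T'.val \ T.val))
  · intro T' hT'
    simp only [Finset.mem_coe, Finset.mem_filter] at hT' ⊢
    have h2 : (T'.val ∩ T.val).card = 2 := by rw [Finset.inter_comm]; exact hT'.2
    have h1 : (T'.val \ T.val).card = 1 := by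
      have := Finset.card_sdiff_add_card_inter T'.val T.val
      rw [h2, T'.2] at this; omega
    rw [Finset.mem_product, Finset.mem_powersetCard, Finset.mem_powersetCard]
    refine ⟨⟨Finset.inter_subset_right, h2⟩, ?_, h1⟩
    intro v hv
    rw [Finset.mem_compl]
    exact (Finset.mem_sdiff.1 hv).2
  · intro a _ b _ hab
    simp only [Prod.mk.injEq] at hab
    apply Subtype.ext
    rw [← Finset.sdiff_union_inter a.val T.val, ← Finset.sdiff_union_inter b.val T.val,
      hab.1, hab.2]

section glue
variable {Ω : Type*} [MeasurableSpace Ω] {μ : Measure Ω} [IsProbabilityMeasure μ]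
  {ι : Type*} {Y : ι → Ω → ℝ}

lemma aux_W01 (h01 : ∀ i ω, Y i ω = 0 ∨ Y i ω = 1) (A : Finset ι) (ω : Ω) :
    (∏ i ∈ A, Y i ω) = 0 ∨ (∏ i ∈ A, Y i ω) = 1 := by
  classical
  by_cases h : ∀ i ∈ A, Y i ω = 1
  · exact Or.inr (Finset.prod_eq_one h)
  · push_neg at h
    obtain ⟨i, hi, hne⟩ := h
    have : Y i ω = 0 := (h01 i ω).resolve_right hne
    exact Or.inl (Finset.prod_eq_zero hi this)

lemma aux_Wmul [DecidableEq ι] (h01 : ∀ i ω, Y i ω = 0 ∨ Y i ω = 1)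
    (A A' : Finset ι) (ω : Ω) :
    (∏ i ∈ A, Y i ω) * (∏ i ∈ A', Y i ω) = ∏ i ∈ A ∪ A', Y i ω := by
  rw [← Finset.prod_union_inter]
  rcases aux_W01 h01 (A ∩ A') ω with h | h
  · -- some factor in the intersection is zero
    have : ∃ i ∈ A ∩ A', Y i ω = 0 := by
      by_contra hc
      push_neg at hc
      have : ∀ i ∈ A ∩ A', Y i ω = 1 := fun i hi => (h01 i ω).resolve_left (hc i hi)
      rw [Finset.prod_eq_one this] at h
      norm_num at h
    obtain ⟨i, hi, h0⟩ := this
    rw [Finset.prod_eq_zero hi h0, Finset.prod_eq_zero (Finset.mem_union_left A' (Finset.mem_of_mem_inter_left hi)) h0]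
    ring
  · rw [h, mul_one]

end glue

section cov
variable {Ω : Type*} [MeasurableSpace Ω] {μ : Measure Ω} [IsProbabilityMeasure μ]
  {ι κ : Type*} [DecidableEq ι] [DecidableEq κ]

lemma aux_cov (Y : ι → Ω → ℝ) (hmeas : ∀ i, Measurable (Y i))
    (h01 : ∀ i ω, Y i ω = 0 ∨ Y i ω = 1) (p : ℝ)
    (hW : ∀ A : Finset ι, ∫ ω, ∏ i ∈ A, Y i ω ∂μ = p ^ A.card)
    (E : κ → Finset ι) (Z : κ → Ω → ℝ) (hZ : ∀ j ω, Z j ω = ∏ i ∈ E j, Y i ω)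
    (a : ℝ) (x : κ) (B : Finset κ)
    (hdisj : ∀ j ∈ B, Disjoint (E x) (E j))
    (hcard : (E x).card = 3) :
    ∫ ω, Z x ω * ∏ j ∈ B, (1 - a * Z j ω) ∂μ
      = p ^ 3 * ∫ ω, ∏ j ∈ B, (1 - a * Z j ω) ∂μ := by
  classical
  -- basic facts about W A := ∏ i ∈ A, Y i
  have hWm : ∀ A : Finset ι, Measurable (fun ω => ∏ i ∈ A, Y i ω) :=
    fun A => Finset.measurable_prod _ (fun i _ => hmeas i)
  have hWb : ∀ (A : Finset ι) ω, |∏ i ∈ A, Y i ω| ≤ 1 := by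
    intro A ω
    rcases aux_W01 h01 A ω with h | h <;> rw [h] <;> norm_num
  have hint : ∀ (g : Ω → ℝ), Measurable g → (∀ ω, |g ω| ≤ 1) → Integrable g μ := by
    intro g hg hb
    exact (integrable_const (1:ℝ)).mono' hg.aestronglyMeasurable
      (ae_of_all _ (by simpa [Real.norm_eq_abs] using hb))
  have hWint : ∀ A : Finset ι, Integrable (fun ω => ∏ i ∈ A, Y i ω) μ :=
    fun A => hint _ (hWm A) (hWb A)
  -- product of the Z's over a set is the W of the biUnion
  have hprodZ : ∀ (K : Finset κ) ω, ∏ j ∈ K, Z j ω = ∏ i ∈ K.biUnion E, Y i ω := by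
    intro K
    induction K using Finset.induction_on with
    | empty => simp
    | @insert c K hc ih =>
      intro ω
      rw [Finset.prod_insert hc, ih ω, hZ c ω, aux_Wmul h01, Finset.biUnion_insert]
  -- expansion of the product ∏(1 - a Z)
  have hexpand : ∀ ω, ∏ j ∈ B, (1 - a * Z j ω)
      = ∑ K ∈ B.powerset, (-a) ^ K.card * ∏ i ∈ K.biUnion E, Y i ω := by
    intro ω
    have h1 : ∏ j ∈ B, (1 - a * Z j ω) = ∏ j ∈ B, ((-(a * Z j ω)) + 1) :=
      Finset.prod_congr rfl (fun j _ => by ring)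
    rw [h1, Finset.prod_add]
    apply Finset.sum_congr rfl
    intro K hK
    rw [Finset.prod_const_one, mul_one]
    have h2 : ∏ j ∈ K, (-(a * Z j ω)) = ∏ j ∈ K, ((-a) * Z j ω) :=
      Finset.prod_congr rfl (fun j _ => by ring)
    rw [h2, Finset.prod_mul_distrib, Finset.prod_const, hprodZ K ω]
  -- disjointness of E x from the biUnion
  have hdisjK : ∀ K ∈ B.powerset, Disjoint (E x) (K.biUnion E) := by
    intro K hK
    rw [Finset.mem_powerset] at hK
    rw [Finset.disjoint_biUnion_right]
    exact fun j hj => hdisj j (hK hj)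
  -- compute the RHS integral
  have hR : ∫ ω, ∏ j ∈ B, (1 - a * Z j ω) ∂μ
      = ∑ K ∈ B.powerset, (-a) ^ K.card * p ^ (K.biUnion E).card := by
    rw [integral_congr_ae (ae_of_all _ hexpand),
      integral_finset_sum _ (fun K _ => (hWint (K.biUnion E)).const_mul _)]
    exact Finset.sum_congr rfl (fun K _ => by rw [integral_const_mul, hW])
  -- compute the LHS integral
  have hL : ∫ ω, Z x ω * ∏ j ∈ B, (1 - a * Z j ω) ∂μ
      = ∑ K ∈ B.powerset, (-a) ^ K.card * p ^ ((E x).card + (K.biUnion E).card) := by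
    have hpt : ∀ ω, Z x ω * ∏ j ∈ B, (1 - a * Z j ω)
        = ∑ K ∈ B.powerset, (-a) ^ K.card * ∏ i ∈ E x ∪ K.biUnion E, Y i ω := by
      intro ω
      rw [hexpand ω, Finset.mul_sum]
      apply Finset.sum_congr rfl
      intro K hK
      rw [hZ x ω, ← aux_Wmul h01]
      ring
    rw [integral_congr_ae (ae_of_all _ hpt),
      integral_finset_sum _ (fun K _ => (hWint (E x ∪ K.biUnion E)).const_mul _)]
    apply Finset.sum_congr rfl
    intro K hK
    rw [integral_const_mul, hW, Finset.card_union_of_disjoint (hdisjK K hK)]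
  rw [hL, hR, Finset.mul_sum]
  apply Finset.sum_congr rfl
  intro K hK
  rw [hcard, pow_add]
  ring
end cov

lemma aux_prod_integral {Ω ι : Type*} [MeasurableSpace Ω] (μ : Measure Ω)
    [IsProbabilityMeasure μ]
    (Y : ι → Ω → ℝ) (hmeas : ∀ i, Measurable (Y i))
    (hindep : iIndepFun Y μ) (p : ℝ)
    (hEY : ∀ i, ∫ ω, Y i ω ∂μ = p) (hIY : ∀ i, Integrable (Y i) μ) :
    ∀ A : Finset ι, ∫ ω, ∏ i ∈ A, Y i ω ∂μ = p ^ A.card := by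
  classical
  intro A
  induction A using Finset.induction_on with
  | empty => simp
  | @insert a A ha ih =>
    have hIF : IndepFun (∏ j ∈ A, Y j) (Y a) μ :=
      hindep.indepFun_finsetProd_of_notMem hmeas ha
    have hPm : AEStronglyMeasurable (∏ j ∈ A, Y j) μ := by
      have : Measurable (fun ω => ∏ j ∈ A, Y j ω) :=
        Finset.measurable_prod _ (fun j _ => hmeas j)
      have he : (∏ j ∈ A, Y j) = fun ω => ∏ j ∈ A, Y j ω := by
        funext ω; simp [Finset.prod_apply]
      rw [he]
      exact this.aestronglyMeasurable
    have := hIF.integral_mul_eq_mul_integral hPm (hmeas a).aestronglyMeasurable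
    have heq : ∫ ω, ∏ i ∈ insert a A, Y i ω ∂μ = ∫ ω, ((∏ j ∈ A, Y j) * Y a) ω ∂μ := by
      apply integral_congr_ae (ae_of_all _ _)
      intro ω
      simp [Finset.prod_insert ha, Finset.prod_apply, mul_comm]
    rw [heq, this, hEY a]
    have h2 : ∫ ω, (∏ j ∈ A, Y j) ω ∂μ = p ^ A.card := by
      rw [← ih]
      apply integral_congr_ae (ae_of_all _ _)
      intro ω; simp [Finset.prod_apply]
    rw [h2, Finset.card_insert_of_notMem ha, pow_succ]

lemma aux_weier {κ : Type*} (s : Finset κ) (g : κ → ℝ)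
    (h0 : ∀ j ∈ s, 0 ≤ g j) (h1 : ∀ j ∈ s, g j ≤ 1) :
    1 - ∑ j ∈ s, g j ≤ ∏ j ∈ s, (1 - g j) := by
  classical
  induction s using Finset.induction_on with
  | empty => simp
  | @insert x s hx ih =>
    rw [Finset.sum_insert hx, Finset.prod_insert hx]
    have hg0 := h0 x (mem_insert_self x s)
    have hg1 := h1 x (mem_insert_self x s)
    have ihs := ih (fun j hj => h0 j (mem_insert_of_mem hj)) (fun j hj => h1 j (mem_insert_of_mem hj))
    have hsum0 : 0 ≤ ∑ j ∈ s, g j := Finset.sum_nonneg (fun j hj => h0 j (mem_insert_of_mem hj))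
    nlinarith [mul_le_mul_of_nonneg_left ihs (by linarith : (0:ℝ) ≤ 1 - g x)]

lemma aux_pairs_insert {κ : Type*} [DecidableEq κ] (adj : κ → κ → Prop) [DecidableRel adj]
    (hsymm : ∀ i j, adj i j → adj j i) (hirr : ∀ i, ¬ adj i i)
    (x : κ) (s : Finset κ) (hx : x ∉ s) :
    ∑ i ∈ insert x s, ((insert x s).filter (adj i)).card
      = (∑ i ∈ s, (s.filter (adj i)).card) + 2 * (s.filter (adj x)).card := by
  rw [Finset.sum_insert hx]
  have h1 : ((insert x s).filter (adj x)).card = (s.filter (adj x)).card := by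
    rw [Finset.filter_insert, if_neg (hirr x)]
  have h2 : ∀ i ∈ s, ((insert x s).filter (adj i)).card
      = (s.filter (adj i)).card + (if adj i x then 1 else 0) := by
    intro i hi
    rw [Finset.filter_insert]
    split_ifs with h
    · rw [Finset.card_insert_of_notMem (fun hc => hx (Finset.mem_of_mem_filter x hc))]
    · rfl
  rw [h1, Finset.sum_congr rfl h2, Finset.sum_add_distrib]
  have h3 : (∑ i ∈ s, if adj i x then 1 else 0) = (s.filter (adj x)).card := by
    rw [Finset.card_filter]
    exact Finset.sum_congr rfl (fun i _ => by
      by_cases h : adj i x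
      · rw [if_pos h, if_pos (hsymm _ _ h)]
      · rw [if_neg h, if_neg (fun hc => h (hsymm _ _ hc))])
  rw [h3]; ring

lemma aux_main {Ω κ : Type*} [MeasurableSpace Ω] [DecidableEq κ] (μ : Measure Ω)
    [IsProbabilityMeasure μ]
    (Z : κ → Ω → ℝ) (hZm : ∀ j, Measurable (Z j)) (hZ0 : ∀ j ω, 0 ≤ Z j ω)
    (hZ1 : ∀ j ω, Z j ω ≤ 1)
    (adj : κ → κ → Prop) [DecidableRel adj]
    (hsymm : ∀ i j, adj i j → adj j i) (hirr : ∀ i, ¬ adj i i)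
    (a q3 q5 : ℝ) (ha0 : 0 ≤ a) (ha1 : a ≤ 1) (hq30 : 0 ≤ q3) (hq31 : q3 ≤ 1) (hq50 : 0 ≤ q5)
    (hEZ : ∀ j, ∫ ω, Z j ω ∂μ = q3)
    (hZZ : ∀ i j, adj i j → ∫ ω, Z i ω * Z j ω ∂μ ≤ q5)
    (hcov : ∀ (x : κ) (B : Finset κ), (∀ j ∈ B, ¬ adj x j ∧ j ≠ x) →
      ∫ ω, Z x ω * ∏ j ∈ B, (1 - a * Z j ω) ∂μ
        = q3 * ∫ ω, ∏ j ∈ B, (1 - a * Z j ω) ∂μ) :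
    ∀ s : Finset κ, ∫ ω, ∏ j ∈ s, (1 - a * Z j ω) ∂μ ≤
      (1 - a * q3) ^ s.card + (a ^ 2 * q5 / 2) * ∑ i ∈ s, ((s.filter (adj i)).card : ℝ) := by
  classical
  -- integrability helper
  have hint : ∀ (g : Ω → ℝ), Measurable g → (∀ ω, |g ω| ≤ 1) → Integrable g μ := by
    intro g hg hb
    exact (integrable_const (1:ℝ)).mono' hg.aestronglyMeasurable
      (ae_of_all _ (by simpa [Real.norm_eq_abs] using hb))
  have hfm : ∀ (u : Finset κ), Measurable (fun ω => ∏ j ∈ u, (1 - a * Z j ω)) :=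
    fun u => Finset.measurable_prod _ (fun j _ => (measurable_const.sub ((hZm j).const_mul a)))
  have hf0 : ∀ j ω, 0 ≤ 1 - a * Z j ω := by
    intro j ω
    nlinarith [hZ0 j ω, hZ1 j ω]
  have hf1 : ∀ j ω, 1 - a * Z j ω ≤ 1 := by
    intro j ω
    nlinarith [hZ0 j ω]
  have hP0 : ∀ (u : Finset κ) ω, 0 ≤ ∏ j ∈ u, (1 - a * Z j ω) :=
    fun u ω => Finset.prod_nonneg (fun j _ => hf0 j ω)
  have hP1 : ∀ (u : Finset κ) ω, ∏ j ∈ u, (1 - a * Z j ω) ≤ 1 :=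
    fun u ω => Finset.prod_le_one (fun j _ => hf0 j ω) (fun j _ => hf1 j ω)
  have hPb : ∀ (u : Finset κ), ∀ ω, |∏ j ∈ u, (1 - a * Z j ω)| ≤ 1 := by
    intro u ω; rw [abs_le]; constructor
    · linarith [hP0 u ω]
    · exact hP1 u ω
  have hPint : ∀ (u : Finset κ), Integrable (fun ω => ∏ j ∈ u, (1 - a * Z j ω)) μ :=
    fun u => hint _ (hfm u) (hPb u)
  have hZb : ∀ j ω, |Z j ω| ≤ 1 := by
    intro j ω; rw [abs_le]; constructor
    · linarith [hZ0 j ω]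
    · exact hZ1 j ω
  have hZPint : ∀ (x : κ) (u : Finset κ),
      Integrable (fun ω => Z x ω * ∏ j ∈ u, (1 - a * Z j ω)) μ := by
    intro x u
    refine hint _ ((hZm x).mul (hfm u)) (fun ω => ?_)
    rw [abs_mul]
    calc |Z x ω| * |∏ j ∈ u, (1 - a * Z j ω)| ≤ 1 * 1 :=
      mul_le_mul (hZb x ω) (hPb u ω) (abs_nonneg _) zero_le_one
    _ = 1 := one_mul 1
  have hZZPint : ∀ (x j : κ) (u : Finset κ),
      Integrable (fun ω => Z x ω * Z j ω * ∏ i ∈ u, (1 - a * Z i ω)) μ := by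
    intro x j u
    refine hint _ (((hZm x).mul (hZm j)).mul (hfm u)) (fun ω => ?_)
    rw [abs_mul, abs_mul]
    have h1 : |Z x ω| * |Z j ω| ≤ 1 :=
      mul_le_mul (hZb x ω) (hZb j ω) (abs_nonneg _) zero_le_one |>.trans_eq (one_mul 1)
    calc |Z x ω| * |Z j ω| * |∏ i ∈ u, (1 - a * Z i ω)| ≤ 1 * 1 :=
      mul_le_mul h1 (hPb u ω) (abs_nonneg _) zero_le_one
    _ = 1 := one_mul 1
  intro s
  induction s using Finset.induction_on with
  | empty => simp
  | @insert x s hx ih =>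
    set A := s.filter (adj x) with hA
    set B := s.filter (fun j => ¬ adj x j) with hB
    -- split of the product over s
    have hsplit : ∀ ω, ∏ j ∈ s, (1 - a * Z j ω)
        = (∏ j ∈ A, (1 - a * Z j ω)) * (∏ j ∈ B, (1 - a * Z j ω)) := by
      intro ω
      rw [hA, hB, Finset.prod_filter_mul_prod_filter_not]
    -- Step 1: pointwise lower bound for Z x * ∏_s
    have pt1 : ∀ ω, Z x ω * ∏ j ∈ B, (1 - a * Z j ω)
          - (∑ j ∈ A, Z x ω * Z j ω * ∏ i ∈ B, (1 - a * Z i ω)) * a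
        ≤ Z x ω * ∏ j ∈ s, (1 - a * Z j ω) := by
      intro ω
      rw [hsplit ω]
      have hw : 1 - ∑ j ∈ A, a * Z j ω ≤ ∏ j ∈ A, (1 - a * Z j ω) := by
        apply aux_weier
        · intro j _; exact mul_nonneg ha0 (hZ0 j ω)
        · intro j _; nlinarith [hZ0 j ω, hZ1 j ω]
      have hZP : 0 ≤ Z x ω * ∏ j ∈ B, (1 - a * Z j ω) :=
        mul_nonneg (hZ0 x ω) (hP0 B ω)
      have := mul_le_mul_of_nonneg_right hw hZP
      have e1 : (∑ j ∈ A, Z x ω * Z j ω * ∏ i ∈ B, (1 - a * Z i ω)) * a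
          = ∑ j ∈ A, (a * Z j ω) * (Z x ω * ∏ i ∈ B, (1 - a * Z i ω)) := by
        rw [Finset.sum_mul]
        exact Finset.sum_congr rfl (fun j _ => by ring)
      have e2 : (1 - ∑ j ∈ A, a * Z j ω) * (Z x ω * ∏ j ∈ B, (1 - a * Z j ω))
          = Z x ω * ∏ j ∈ B, (1 - a * Z j ω)
            - ∑ j ∈ A, (a * Z j ω) * (Z x ω * ∏ i ∈ B, (1 - a * Z i ω)) := by
        rw [sub_mul, one_mul, Finset.sum_mul]
      have e3 : (∏ j ∈ A, (1 - a * Z j ω)) * (Z x ω * ∏ j ∈ B, (1 - a * Z j ω))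
          = Z x ω * ((∏ j ∈ A, (1 - a * Z j ω)) * ∏ j ∈ B, (1 - a * Z j ω)) := by ring
      rw [e1]
      linarith [this, e2.symm.le, e2.le, e3.le, e3.symm.le]
    -- Step 2: integrate the lower bound
    have int1 : ∫ ω, Z x ω * ∏ j ∈ B, (1 - a * Z j ω) ∂μ
          - (∑ j ∈ A, ∫ ω, Z x ω * Z j ω * ∏ i ∈ B, (1 - a * Z i ω) ∂μ) * a
        ≤ ∫ ω, Z x ω * ∏ j ∈ s, (1 - a * Z j ω) ∂μ := by
      have hlhs : Integrable (fun ω => Z x ω * ∏ j ∈ B, (1 - a * Z j ω)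
          - (∑ j ∈ A, Z x ω * Z j ω * ∏ i ∈ B, (1 - a * Z i ω)) * a) μ :=
        ((hZPint x B).sub ((integrable_finset_sum A
          (fun j _ => hZZPint x j B)).mul_const a))
      have := integral_mono hlhs (hZPint x s) pt1
      rwa [integral_sub (hZPint x B) ((integrable_finset_sum A
          (fun j _ => hZZPint x j B)).mul_const a), integral_mul_const,
        integral_finset_sum A (fun j _ => hZZPint x j B)] at this
    -- Step 3: covariance zero on B
    have hcovB : ∫ ω, Z x ω * ∏ j ∈ B, (1 - a * Z j ω) ∂μ
        = q3 * ∫ ω, ∏ j ∈ B, (1 - a * Z j ω) ∂μ := by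
      apply hcov
      intro j hj
      rw [hB, Finset.mem_filter] at hj
      exact ⟨hj.2, fun hc => hx (hc ▸ hj.1)⟩
    -- Step 4: each cross term is at most q5
    have hcross : ∀ j ∈ A, ∫ ω, Z x ω * Z j ω * ∏ i ∈ B, (1 - a * Z i ω) ∂μ ≤ q5 := by
      intro j hj
      rw [hA, Finset.mem_filter] at hj
      have hle : ∀ ω, Z x ω * Z j ω * ∏ i ∈ B, (1 - a * Z i ω) ≤ Z x ω * Z j ω := by
        intro ω
        have h1 : 0 ≤ Z x ω * Z j ω := mul_nonneg (hZ0 x ω) (hZ0 j ω)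
        nlinarith [hP1 B ω, hP0 B ω]
      calc ∫ ω, Z x ω * Z j ω * ∏ i ∈ B, (1 - a * Z i ω) ∂μ
          ≤ ∫ ω, Z x ω * Z j ω ∂μ := by
            apply integral_mono (hZZPint x j B) _ hle
            refine hint _ ((hZm x).mul (hZm j)) (fun ω => ?_)
            rw [abs_mul]
            calc |Z x ω| * |Z j ω| ≤ 1 * 1 :=
              mul_le_mul (hZb x ω) (hZb j ω) (abs_nonneg _) zero_le_one
            _ = 1 := one_mul 1
        _ ≤ q5 := hZZ x j hj.2
    -- Step 5: ∫ ∏_B ≥ ∫ ∏_s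
    have hBs : ∫ ω, ∏ j ∈ s, (1 - a * Z j ω) ∂μ ≤ ∫ ω, ∏ j ∈ B, (1 - a * Z j ω) ∂μ := by
      apply integral_mono (hPint s) (hPint B)
      intro ω
      dsimp only
      rw [hsplit ω]
      nlinarith [hP0 A ω, hP1 A ω, hP0 B ω]
    -- combine: lower bound on ∫ Z x ∏_s
    have hkey : q3 * ∫ ω, ∏ j ∈ s, (1 - a * Z j ω) ∂μ - a * (A.card : ℝ) * q5
        ≤ ∫ ω, Z x ω * ∏ j ∈ s, (1 - a * Z j ω) ∂μ := by
      have h1 : (∑ j ∈ A, ∫ ω, Z x ω * Z j ω * ∏ i ∈ B, (1 - a * Z i ω) ∂μ)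
          ≤ (A.card : ℝ) * q5 := by
        calc (∑ j ∈ A, ∫ ω, Z x ω * Z j ω * ∏ i ∈ B, (1 - a * Z i ω) ∂μ)
            ≤ ∑ j ∈ A, q5 := Finset.sum_le_sum hcross
          _ = (A.card : ℝ) * q5 := by rw [Finset.sum_const, nsmul_eq_mul]
      have h2 : q3 * ∫ ω, ∏ j ∈ s, (1 - a * Z j ω) ∂μ
          ≤ q3 * ∫ ω, ∏ j ∈ B, (1 - a * Z j ω) ∂μ :=
        mul_le_mul_of_nonneg_left hBs hq30
      nlinarith [int1, hcovB]
    -- expand the product over insert x s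
    have hexp : ∫ ω, ∏ j ∈ insert x s, (1 - a * Z j ω) ∂μ
        = ∫ ω, ∏ j ∈ s, (1 - a * Z j ω) ∂μ
          - a * ∫ ω, Z x ω * ∏ j ∈ s, (1 - a * Z j ω) ∂μ := by
      have : ∀ ω, ∏ j ∈ insert x s, (1 - a * Z j ω)
          = ∏ j ∈ s, (1 - a * Z j ω) - a * (Z x ω * ∏ j ∈ s, (1 - a * Z j ω)) := by
        intro ω
        rw [Finset.prod_insert hx]; ring
      rw [integral_congr_ae (ae_of_all _ this),
        integral_sub (hPint s) (((hZPint x s)).const_mul a), integral_const_mul]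
    -- put everything together
    have hstep : ∫ ω, ∏ j ∈ insert x s, (1 - a * Z j ω) ∂μ
        ≤ (1 - a * q3) * ∫ ω, ∏ j ∈ s, (1 - a * Z j ω) ∂μ + a ^ 2 * (A.card : ℝ) * q5 := by
      rw [hexp]
      nlinarith [hkey, ha0]
    have haq : 0 ≤ 1 - a * q3 := by nlinarith
    have haq1 : 1 - a * q3 ≤ 1 := by nlinarith
    -- pairs counting
    have hpairs : ∑ i ∈ insert x s, (((insert x s).filter (adj i)).card : ℝ)
        = (∑ i ∈ s, ((s.filter (adj i)).card : ℝ)) + 2 * (A.card : ℝ) := by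
      have := aux_pairs_insert adj hsymm hirr x s hx
      rw [hA]
      exact_mod_cast this
    have herr0 : 0 ≤ (a ^ 2 * q5 / 2) * ∑ i ∈ s, ((s.filter (adj i)).card : ℝ) := by
      apply mul_nonneg (by positivity)
      exact Finset.sum_nonneg (fun i _ => Nat.cast_nonneg _)
    calc ∫ ω, ∏ j ∈ insert x s, (1 - a * Z j ω) ∂μ
        ≤ (1 - a * q3) * ∫ ω, ∏ j ∈ s, (1 - a * Z j ω) ∂μ + a ^ 2 * (A.card : ℝ) * q5 := hstep
      _ ≤ (1 - a * q3) * ((1 - a * q3) ^ s.card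
            + (a ^ 2 * q5 / 2) * ∑ i ∈ s, ((s.filter (adj i)).card : ℝ))
            + a ^ 2 * (A.card : ℝ) * q5 := by
          exact add_le_add_left (mul_le_mul_of_nonneg_left ih haq) _
      _ ≤ (1 - a * q3) ^ (insert x s).card
            + (a ^ 2 * q5 / 2) * ∑ i ∈ insert x s, (((insert x s).filter (adj i)).card : ℝ) := by
          rw [Finset.card_insert_of_notMem hx, hpairs]
          have hps : (1 - a * q3) ^ (s.card + 1) = (1 - a * q3) ^ s.card * (1 - a * q3) :=
            pow_succ _ _
          have h1 : (1 - a * q3) * ((a ^ 2 * q5 / 2) * ∑ i ∈ s, ((s.filter (adj i)).card : ℝ))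
              ≤ (a ^ 2 * q5 / 2) * ∑ i ∈ s, ((s.filter (adj i)).card : ℝ) :=
            mul_le_of_le_one_left herr0 haq1
          have h2 : (1 - a * q3) * ((1 - a * q3) ^ s.card
                + (a ^ 2 * q5 / 2) * ∑ i ∈ s, ((s.filter (adj i)).card : ℝ))
              = (1 - a * q3) ^ s.card * (1 - a * q3)
                + (1 - a * q3) * ((a ^ 2 * q5 / 2) * ∑ i ∈ s, ((s.filter (adj i)).card : ℝ)) := by
            ring
          have h3 : (a ^ 2 * q5 / 2) * ((∑ i ∈ s, ((s.filter (adj i)).card : ℝ)) + 2 * (A.card : ℝ))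
              = (a ^ 2 * q5 / 2) * (∑ i ∈ s, ((s.filter (adj i)).card : ℝ))
                + a ^ 2 * (A.card : ℝ) * q5 := by ring
          linarith [h1, h2.le, h2.symm.le, h3.le, h3.symm.le, hps.le, hps.symm.le]
theorem stmt10 {Ω : Type*} [MeasurableSpace Ω] (μ : Measure Ω) [IsProbabilityMeasure μ]
    {n : ℕ} (hn : 3 ≤ n)
    (p : ℝ) (hp0 : 0 < p) (hp1 : p < 1)
    (Y : {e : Finset (Fin n) // e.card = 2} → Ω → ℝ)
    (hmeas : ∀ e, Measurable (Y e))
    (h01 : ∀ e ω, Y e ω = 0 ∨ Y e ω = 1)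
    (hindep : iIndepFun Y μ)
    (hid : ∀ e, μ {ω | Y e ω = 1} = ENNReal.ofReal p)
    (Z : {T : Finset (Fin n) // T.card = 3} → Ω → ℝ)
    (hZ : ∀ T ω, Z T ω =
      ∏ e ∈ Finset.univ.filter
        (fun e : {e : Finset (Fin n) // e.card = 2} => e.val ⊆ T.val), Y e ω)
    (t : ℝ) (ht : 0 < t) :
    (μ {ω | ∑ T, Z T ω = 0}).toReal ≤
      (1 - p ^ 3) ^ n.choose 3 *
        (1 + Real.exp (-t) * (p ^ 3 / (1 - p ^ 3))) ^ n.choose 3 +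
      t ^ 2 * ((3 / 2 : ℝ) * (n.choose 3) * ((n : ℝ) - 3) * p ^ 5) := by
  classical
  set a : ℝ := 1 - Real.exp (-t) with haDef
  have hexp0 : 0 < Real.exp (-t) := Real.exp_pos _
  have hexp1 : Real.exp (-t) ≤ 1 := Real.exp_le_one_iff.mpr (by linarith)
  have ha0 : 0 ≤ a := by simp only [haDef]; linarith
  have ha1 : a ≤ 1 := by simp only [haDef]; linarith
  have hat : a ≤ t := by
    have := Real.add_one_le_exp (-t)
    simp only [haDef]; linarith
  -- basic facts about Y
  have hEY : ∀ e, ∫ ω, Y e ω ∂μ = p := by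
    intro e
    have hset : MeasurableSet {ω | Y e ω = 1} := (hmeas e) (measurableSet_singleton 1)
    have heq : (fun ω => Y e ω) = {ω | Y e ω = 1}.indicator (fun _ => (1:ℝ)) := by
      funext ω
      rcases h01 e ω with h | h
      · simp [Set.indicator_apply, Set.mem_setOf_eq, h]
      · simp [Set.indicator_apply, Set.mem_setOf_eq, h]
    rw [heq, integral_indicator_const _ hset, measureReal_def, hid e, ENNReal.toReal_ofReal hp0.le,
      smul_eq_mul, mul_one]
  have hIY : ∀ e, Integrable (Y e) μ := by
    intro e
    refine (integrable_const (1:ℝ)).mono' (hmeas e).aestronglyMeasurable (ae_of_all _ ?_)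
    intro ω
    rcases h01 e ω with h | h <;> rw [h] <;> norm_num
  have hW := aux_prod_integral μ Y hmeas hindep p hEY hIY
  -- facts about Z
  have hZW : ∀ T ω, Z T ω = ∏ e ∈ triE T, Y e ω := hZ
  have hZ01 : ∀ T ω, Z T ω = 0 ∨ Z T ω = 1 := by
    intro T ω; rw [hZW T ω]; exact aux_W01 h01 _ ω
  have hZ0 : ∀ T ω, 0 ≤ Z T ω := by
    intro T ω; rcases hZ01 T ω with h | h <;> rw [h] <;> norm_num
  have hZ1 : ∀ T ω, Z T ω ≤ 1 := by
    intro T ω; rcases hZ01 T ω with h | h <;> rw [h] <;> norm_num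
  have hZm : ∀ T, Measurable (Z T) := by
    intro T
    have : Z T = fun ω => ∏ e ∈ triE T, Y e ω := funext (hZW T)
    rw [this]
    exact Finset.measurable_prod _ (fun e _ => hmeas e)
  -- the adjacency relation
  set adj : {T : Finset (Fin n) // T.card = 3} → {T : Finset (Fin n) // T.card = 3} → Prop :=
    fun i j => (i.val ∩ j.val).card = 2 with hadjDef
  have hsymm : ∀ i j, adj i j → adj j i := by
    intro i j h
    simp only [hadjDef] at *
    rwa [Finset.inter_comm]
  have hirr : ∀ i, ¬ adj i i := by
    intro i h
    simp only [hadjDef, Finset.inter_self, i.2] at h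
    omega
  -- moments
  have hp3 : (0:ℝ) ≤ p ^ 3 := by positivity
  have hp31 : p ^ 3 ≤ 1 := le_of_lt (pow_lt_one₀ hp0.le hp1 (by norm_num))
  have hp5 : (0:ℝ) ≤ p ^ 5 := by positivity
  have hEZ : ∀ j, ∫ ω, Z j ω ∂μ = p ^ 3 := by
    intro j
    rw [integral_congr_ae (ae_of_all _ (hZW j)), hW, card_triE]
  have hZZ : ∀ i j, adj i j → ∫ ω, Z i ω * Z j ω ∂μ ≤ p ^ 5 := by
    intro i j hadj
    have hpt : ∀ ω, Z i ω * Z j ω = ∏ e ∈ triE i ∪ triE j, Y e ω := by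
      intro ω
      rw [hZW i ω, hZW j ω, aux_Wmul h01]
    rw [integral_congr_ae (ae_of_all _ hpt), hW, card_triE_union hadj]
  have hcov : ∀ (x : {T : Finset (Fin n) // T.card = 3})
      (B : Finset {T : Finset (Fin n) // T.card = 3}), (∀ j ∈ B, ¬ adj x j ∧ j ≠ x) →
      ∫ ω, Z x ω * ∏ j ∈ B, (1 - a * Z j ω) ∂μ
        = p ^ 3 * ∫ ω, ∏ j ∈ B, (1 - a * Z j ω) ∂μ := by
    intro x B hB
    apply aux_cov Y hmeas h01 p hW triE Z hZW a x B _ (card_triE x)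
    intro j hj
    exact triE_disj (fun hc => (hB j hj).2 hc.symm) (hB j hj).1
  -- main bound
  have hmain := aux_main μ Z hZm hZ0 hZ1 adj hsymm hirr a (p^3) (p^5)
    ha0 ha1 hp3 hp31 hp5 hEZ hZZ hcov Finset.univ
  -- cardinalities
  have hNcard : (Finset.univ : Finset {T : Finset (Fin n) // T.card = 3}).card = n.choose 3 := by
    rw [Finset.card_univ, Fintype.card_finset_len, Fintype.card_fin]
  -- indicator step
  have hSmeas : MeasurableSet {ω | ∑ T, Z T ω = 0} := by
    have hm : Measurable (fun ω => ∑ T, Z T ω) :=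
      Finset.measurable_sum _ (fun T _ => hZm T)
    exact hm (measurableSet_singleton 0)
  have hf0 : ∀ T ω, (0:ℝ) ≤ 1 - a * Z T ω := by
    intro T ω
    nlinarith [hZ0 T ω, hZ1 T ω]
  have hP0 : ∀ ω, (0:ℝ) ≤ ∏ T, (1 - a * Z T ω) :=
    fun ω => Finset.prod_nonneg (fun T _ => hf0 T ω)
  have hPm : Measurable (fun ω => ∏ T, (1 - a * Z T ω)) :=
    Finset.measurable_prod _ (fun T _ => measurable_const.sub ((hZm T).const_mul a))
  have hPint : Integrable (fun ω => ∏ T, (1 - a * Z T ω)) μ := by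
    refine (integrable_const (1:ℝ)).mono' hPm.aestronglyMeasurable (ae_of_all _ ?_)
    intro ω
    rw [Real.norm_eq_abs, abs_le]
    constructor
    · linarith [hP0 ω]
    · exact Finset.prod_le_one (fun T _ => hf0 T ω)
        (fun T _ => by nlinarith [hZ0 T ω])
  have hind : (μ {ω | ∑ T, Z T ω = 0}).toReal ≤ ∫ ω, ∏ T, (1 - a * Z T ω) ∂μ := by
    rw [← measureReal_def, ← integral_indicator_one hSmeas]
    apply integral_mono ((integrable_const (1:ℝ)).indicator hSmeas) hPint
    intro ω
    by_cases hω : ω ∈ {ω | ∑ T, Z T ω = 0}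
    · rw [Set.indicator_of_mem hω]
      have hz : ∀ T ∈ Finset.univ, Z T ω = 0 :=
        (Finset.sum_eq_zero_iff_of_nonneg (fun T _ => hZ0 T ω)).1 hω
      have hone : ∏ T, (1 - a * Z T ω) = 1 :=
        Finset.prod_eq_one (fun T hT => by rw [hz T hT]; ring)
      dsimp only
      rw [hone]
    · rw [Set.indicator_of_notMem hω]
      exact hP0 ω
  -- counting the pairs
  have hn3 : (0:ℝ) ≤ (n:ℝ) - 3 := by
    have : (3:ℝ) ≤ (n:ℝ) := by exact_mod_cast hn
    linarith
  have hsum : (∑ i : {T : Finset (Fin n) // T.card = 3},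
      ((Finset.univ.filter (adj i)).card : ℝ))
      ≤ (n.choose 3 : ℝ) * (3 * ((n:ℝ) - 3)) := by
    have hcast : ((n - 3 : ℕ) : ℝ) = (n:ℝ) - 3 := by
      rw [Nat.cast_sub hn]; norm_num
    calc (∑ i : {T : Finset (Fin n) // T.card = 3},
        ((Finset.univ.filter (adj i)).card : ℝ))
        ≤ ∑ i : {T : Finset (Fin n) // T.card = 3}, ((3 * (n - 3) : ℕ) : ℝ) := by
          apply Finset.sum_le_sum
          intro i _
          exact_mod_cast nbr_count i
      _ = ((Finset.univ : Finset {T : Finset (Fin n) // T.card = 3}).card : ℝ)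
          * ((3 * (n - 3) : ℕ) : ℝ) := by
          rw [Finset.sum_const, nsmul_eq_mul]
      _ = (n.choose 3 : ℝ) * (3 * ((n:ℝ) - 3)) := by
          rw [hNcard]
          push_cast [hcast]
          ring
  -- final algebra
  have hp3lt : (0:ℝ) < 1 - p ^ 3 := by
    have : p ^ 3 < 1 := pow_lt_one₀ hp0.le hp1 (by norm_num)
    linarith
  have hfact : 1 - a * p ^ 3 = (1 - p ^ 3) * (1 + Real.exp (-t) * (p ^ 3 / (1 - p ^ 3))) := by
    field_simp
    ring
  have herr : (a ^ 2 * p ^ 5 / 2) * (∑ i : {T : Finset (Fin n) // T.card = 3},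
      ((Finset.univ.filter (adj i)).card : ℝ))
      ≤ t ^ 2 * ((3 / 2 : ℝ) * (n.choose 3) * ((n : ℝ) - 3) * p ^ 5) := by
    have hsum0 : (0:ℝ) ≤ ∑ i : {T : Finset (Fin n) // T.card = 3},
        ((Finset.univ.filter (adj i)).card : ℝ) :=
      Finset.sum_nonneg (fun i _ => Nat.cast_nonneg _)
    have hc0 : (0:ℝ) ≤ a ^ 2 * p ^ 5 / 2 := by positivity
    have ha2 : a ^ 2 ≤ t ^ 2 := by nlinarith
    calc (a ^ 2 * p ^ 5 / 2) * (∑ i : {T : Finset (Fin n) // T.card = 3},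
        ((Finset.univ.filter (adj i)).card : ℝ))
        ≤ (a ^ 2 * p ^ 5 / 2) * ((n.choose 3 : ℝ) * (3 * ((n:ℝ) - 3))) :=
          mul_le_mul_of_nonneg_left hsum hc0
      _ ≤ (t ^ 2 * p ^ 5 / 2) * ((n.choose 3 : ℝ) * (3 * ((n:ℝ) - 3))) := by
          apply mul_le_mul_of_nonneg_right _
            (mul_nonneg (Nat.cast_nonneg _) (by linarith [hn3]))
          exact (div_le_div_iff_of_pos_right (by norm_num : (0:ℝ) < 2)).mpr
            (mul_le_mul_of_nonneg_right ha2 hp5)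
      _ = t ^ 2 * ((3 / 2 : ℝ) * (n.choose 3) * ((n : ℝ) - 3) * p ^ 5) := by ring
  have hpow : (1 - a * p ^ 3) ^ (Finset.univ :
      Finset {T : Finset (Fin n) // T.card = 3}).card
      = (1 - p ^ 3) ^ n.choose 3 *
        (1 + Real.exp (-t) * (p ^ 3 / (1 - p ^ 3))) ^ n.choose 3 := by
    rw [hNcard, hfact, mul_pow]
  calc (μ {ω | ∑ T, Z T ω = 0}).toReal
      ≤ ∫ ω, ∏ T, (1 - a * Z T ω) ∂μ := hind
    _ ≤ (1 - a * p ^ 3) ^ (Finset.univ :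
          Finset {T : Finset (Fin n) // T.card = 3}).card
        + (a ^ 2 * p ^ 5 / 2) * (∑ i : {T : Finset (Fin n) // T.card = 3},
          ((Finset.univ.filter (adj i)).card : ℝ)) := hmain
    _ ≤ (1 - p ^ 3) ^ n.choose 3 *
          (1 + Real.exp (-t) * (p ^ 3 / (1 - p ^ 3))) ^ n.choose 3 +
        t ^ 2 * ((3 / 2 : ℝ) * (n.choose 3) * ((n : ℝ) - 3) * p ^ 5) := by
      rw [hpow]
      exact add_le_add_right herr _
end
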